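/- arXiv:1209.2460 — 2 statements merged into one kernel-verified Lean document; each statement's English description precedes it below -/
import Mathlib

section
/- Every P^k-neighbor Π of Λ (for p = P∩Z_F coprime to d(Λ)) equals Λ(P,X) for some X ⊆ Λ isotropic modulo P with dim X/PX = k; one may take X generated by representatives of PΠ modulo P(Π ∩ Λ). -/
open scoped nonZeroDivisors

section

variable (O : Type*) [CommRing O] [IsDedekindDomain O]
  (L : Type*) [Field L] [Algebra O L] [IsFractionRing O L]
  (V : Type*) [AddCommGroup V] [Module L V] [Module O V] [IsScalarTower O L V]
  (φ : V → V → L) (Λ : Submodule O V) (P Pbar : Ideal O) (k : ℕ)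

/-- `X` is a `k`-dimensional isotropic subspace of `Λ` modulo `P` (isotropic modulo
`q = P·P̄`, with `dim_{Z_L/P} X/PX = k`). -/
def IsIsotropicOfDim (X : Submodule O V) : Prop :=
  X ≤ Λ ∧ X.FG ∧
  (∀ x ∈ X, ∀ y ∈ X,
    φ x y ∈ Submodule.map (Algebra.linearMap O L) ((P * Pbar : Ideal O) : Submodule O O)) ∧
  Nonempty ((↥X ⧸ (P • (⊤ : Submodule O ↥X))) ≃ₗ[O] (Fin k → O ⧸ P))

/-- `Π` is a `P^k`-neighbor of `Λ`: an integral lattice with `Π/(Λ∩Π) ≅ (Z_L/P)^k` and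
`Λ/(Λ∩Π) ≅ (Z_L/P̄)^k`. -/
def IsPkNeighbor (Pi : Submodule O V) : Prop :=
  (∀ x ∈ Pi, ∀ y ∈ Pi, φ x y ∈ (algebraMap O L).range) ∧
  Nonempty ((↥Pi ⧸ ((Λ ⊓ Pi).comap Pi.subtype)) ≃ₗ[O] (Fin k → O ⧸ P)) ∧
  Nonempty ((↥Λ ⧸ ((Λ ⊓ Pi).comap Λ.subtype)) ≃ₗ[O] (Fin k → O ⧸ Pbar))

end

/-!
Put `M = Λ ∩ Π`. The quotients `Π/M` and `Λ/M` are killed by `P` and `P̄`, and nondegeneracy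
modulo `P̄` gives `PΛ ⊆ P̄Λ ⊆ M`; for `k > 0` this forces `P = P̄`, while for `k = 0` we have
`Π = Λ` and `X = 0` works.

Otherwise pick `π ∈ P` and `a ∈ P⁻¹` with `aπ ≡ 1 (mod P)`, lift a basis of `Π/M` to
`u₁, …, u_k ∈ Π` and put `X = ⟨πu₁, …, πu_k⟩ ⊆ PΠ`. Since `a` undoes `π` modulo `P`, we get
`P⁻¹X ⊆ Π`, `Π ⊆ P⁻¹X + M`, `PΠ ⊆ X + PM` and the independence of the `πuᵢ` modulo `PX`.
The remaining inclusion `Λ ∩ P̄X^# ⊆ M` is a duality statement: with `y_l` lifting a basis of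
`Λ/M`, the square matrix `φ(πuᵢ, y_l)` modulo `P` has trivial left kernel by nondegeneracy of
`Λ` modulo `P`, hence trivial right kernel.
-/

open scoped Pointwise
open Submodule IsLocalization

section BasisMod

variable {R M ι : Type*} [CommRing R] [AddCommGroup M] [Module R M] {I J : Ideal R}
  {A N : Submodule R M}

/-- `u` lifts a basis of `A ⧸ N` over `R ⧸ I`. -/
structure IsBasisMod [Fintype ι] (I : Ideal R) (u : ι → M) (A N : Submodule R M) : Prop where
  mem : ∀ i, u i ∈ A
  le_span_sup : A ≤ span R (Set.range u) ⊔ N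
  mem_of_sum_mem : ∀ d : ι → R, ∑ i, d i • u i ∈ N → ∀ i, d i ∈ I

theorem Submodule.smul_le_of_quotEquivPi (e : (A ⧸ N.comap A.subtype) ≃ₗ[R] (ι → R ⧸ I)) :
    I • A ≤ N := by
  refine smul_le.mpr fun r hr x hx => ?_
  have hkill : r • e (Submodule.Quotient.mk ⟨x, hx⟩) = 0 := by
    ext i; simp [Algebra.smul_def, Ideal.Quotient.eq_zero_iff_mem.mpr hr]
  rwa [← map_smul, ← Submodule.Quotient.mk_smul, LinearEquiv.map_eq_zero_iff,
    Submodule.Quotient.mk_eq_zero] at hkill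

theorem exists_isBasisMod_of_quotEquivPi [Fintype ι] [DecidableEq ι]
    (e : (A ⧸ N.comap A.subtype) ≃ₗ[R] (ι → R ⧸ I)) : ∃ u : ι → M, IsBasisMod I u A N := by
  choose u hu using fun i => Submodule.Quotient.mk_surjective _ (e.symm (Pi.single i 1))
  have he : ∀ d : ι → R,
      e (Submodule.Quotient.mk (∑ i, d i • u i)) = fun i => Ideal.Quotient.mk I (d i) := by
    intro d
    rw [← mkQ_apply, map_sum, map_sum]
    simp only [map_smul, mkQ_apply, hu, LinearEquiv.apply_symm_apply]
    ext j
    simp [Pi.single_apply, Algebra.smul_def]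
  refine ⟨fun i => u i, fun i => (u i).2, fun x hx => ?_, fun d hd i => ?_⟩
  · choose d hd using fun i => Ideal.Quotient.mk_surjective (e (Submodule.Quotient.mk ⟨x, hx⟩) i)
    have hzero : e (Submodule.Quotient.mk (⟨x, hx⟩ - ∑ i, d i • u i)) = 0 := by
      rw [Submodule.Quotient.mk_sub, map_sub, he, sub_eq_zero]
      exact funext fun i => (hd i).symm
    rw [LinearEquiv.map_eq_zero_iff, Submodule.Quotient.mk_eq_zero] at hzero
    rw [← add_sub_cancel (∑ i, d i • (u i : M)) x]
    exact add_mem_sup (sum_mem fun i _ => smul_mem _ _ (subset_span ⟨i, rfl⟩))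
      (by simpa using hzero)
  · have hzero : Submodule.Quotient.mk (p := N.comap A.subtype) (∑ i, d i • u i) = 0 := by
      rw [Submodule.Quotient.mk_eq_zero]; simpa using hd
    simpa [hzero, Ideal.Quotient.eq_zero_iff_mem] using (congr_fun (he d) i).symm

theorem IsBasisMod.le_of_isEmpty [Fintype ι] [IsEmpty ι] {u : ι → M} (hu : IsBasisMod I u A N) :
    A ≤ N := by
  simpa [Set.range_eq_empty] using hu.le_span_sup

theorem IsBasisMod.le_of_smul_le [Fintype ι] [DecidableEq ι] [Nonempty ι] {u : ι → M}
    (hu : IsBasisMod J u A N) (h : I • A ≤ N) : I ≤ J := fun q hq => by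
  obtain ⟨i⟩ := ‹Nonempty ι›
  have hqu : ∑ j, (Pi.single i q : ι → R) j • u j ∈ N := by
    simpa [Pi.single_apply] using h (smul_mem_smul hq (hu.mem i))
  simpa using hu.mem_of_sum_mem _ hqu i

theorem Submodule.nonempty_quotSmulTopEquivPi [Fintype ι] [DecidableEq ι] {v : ι → M}
    (hind : ∀ d : ι → R, ∑ i, d i • v i ∈ I • span R (Set.range v) → ∀ i, d i ∈ I) :
    Nonempty ((span R (Set.range v) ⧸ I • (⊤ : Submodule R (span R (Set.range v))))
      ≃ₗ[R] (ι → R ⧸ I)) := by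
  set X := span R (Set.range v)
  have hv : ∀ i, v i ∈ X := fun i => subset_span ⟨i, rfl⟩
  let q : (ι → R) →ₗ[R] X ⧸ I • (⊤ : Submodule R X) := (I • (⊤ : Submodule R X)).mkQ ∘ₗ
    (Fintype.linearCombination R v).codRestrict X fun d => sum_mem fun i _ => smul_mem _ _ (hv i)
  have hq : Function.Surjective q := by
    rintro ⟨⟨x, hx⟩⟩
    obtain ⟨d, rfl⟩ := (mem_span_range_iff_exists_fun R).mp hx
    exact ⟨d, rfl⟩
  have hker : LinearMap.ker q = pi Set.univ fun _ => I := by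
    ext d
    simp only [q, LinearMap.mem_ker, LinearMap.comp_apply, mkQ_apply, Submodule.Quotient.mk_eq_zero,
      mem_smul_top_iff, mem_pi, Set.mem_univ, forall_const]
    exact ⟨hind d, fun hd => sum_mem fun i _ => smul_mem_smul (hd i) (hv i)⟩
  exact ⟨(q.quotKerEquivOfSurjective hq).symm ≪≫ₗ quotEquivOfEq _ _ hker ≪≫ₗ
    quotientPi fun _ => I⟩

theorem Submodule.span_range_smul_le_smul {π : R} {u : ι → M} (hπ : π ∈ I)
    (hu : ∀ i, u i ∈ A) : span R (Set.range (π • u)) ≤ I • A :=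
  span_le.mpr <| Set.range_subset_iff.mpr fun i => smul_mem_smul hπ (hu i)

theorem Submodule.smul_mem_span_range_smul {π : R} {u : ι → M} {n : M}
    (hn : n ∈ span R (Set.range u)) : π • n ∈ span R (Set.range (π • u)) := by
  have h : span R (Set.range (π • u)) = π • span R (Set.range u) := by
    rw [← span_smul, ← Set.range_smul]; rfl
  exact h ▸ smul_mem_pointwise_smul n π _ hn

end BasisMod

theorem Ideal.mem_of_sum_mul_mem {R ι : Type*} [CommRing R] [Fintype ι] [DecidableEq ι]
    {P : Ideal R} [P.IsPrime] {b : ι → ι → R}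
    (hleft : ∀ d : ι → R, (∀ l, ∑ i, d i * b i l ∈ P) → ∀ i, d i ∈ P) {e : ι → R}
    (he : ∀ i, ∑ l, b i l * e l ∈ P) (l : ι) : e l ∈ P := by
  let B : Matrix ι ι (R ⧸ P) := Matrix.of fun i l => Ideal.Quotient.mk P (b i l)
  have hdet : B.det ≠ 0 := by
    intro hdet
    obtain ⟨x, hx0, hx⟩ := Matrix.exists_vecMul_eq_zero_iff.mpr hdet
    choose d hd using fun i => Ideal.Quotient.mk_surjective (x i)
    refine hx0 (funext fun i => ?_)
    rw [← hd i, Pi.zero_apply, Ideal.Quotient.eq_zero_iff_mem]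
    refine hleft d (fun l => ?_) i
    rw [← Ideal.Quotient.eq_zero_iff_mem, map_sum]
    simpa [Matrix.vecMul, dotProduct, B, hd] using congr_fun hx l
  by_contra hl
  refine hdet (Matrix.exists_mulVec_eq_zero_iff.mp
    ⟨fun l => Ideal.Quotient.mk P (e l), fun h => hl ?_, funext fun i => ?_⟩)
  · exact Ideal.Quotient.eq_zero_iff_mem.mp (congr_fun h l)
  · simpa [Matrix.mulVec, dotProduct, B, ← map_mul, ← map_sum, Ideal.Quotient.eq_zero_iff_mem]
      using he i

section Sesquilinear

variable {O L V : Type*} [CommRing O] [CommRing L] [Algebra O L] [AddCommGroup V] [Module O V]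
  {τ : O →+* O} (B : V →ₗ[O] V →ₛₗ[τ] L) {A : Submodule O V}

theorem LinearMap.apply_mem_coeSubmodule_of_mem_smul_left {I : Ideal O} {x y : V}
    (hA : ∀ w ∈ A, B w y ∈ (algebraMap O L).range) (hx : x ∈ I • A) :
    B x y ∈ coeSubmodule L I := by
  refine (smul_le (P := (coeSubmodule L I).comap (B.flip y))).mpr (fun r hr w hw => ?_) hx
  obtain ⟨c, hc⟩ := hA w hw
  exact ⟨r * c, I.mul_mem_right c hr, by simp [← hc, Algebra.smul_def]⟩

theorem LinearMap.apply_mem_coeSubmodule_of_mem_smul_right {J K : Ideal O} {x y : V}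
    (hA : ∀ w ∈ A, B x w ∈ coeSubmodule L K) (hy : y ∈ J • A) :
    B x y ∈ coeSubmodule L (J.map τ * K) := by
  refine (smul_le (P := (coeSubmodule L (J.map τ * K)).comap (B x))).mpr
    (fun r hr w hw => ?_) hy
  obtain ⟨c, hc, hcw⟩ := hA w hw
  exact ⟨τ r * c, Ideal.mul_mem_mul (Ideal.mem_map_of_mem τ hr) hc,
    by simp [← hcw, Algebra.smul_def]⟩

theorem LinearMap.smul_le_map_smul {Λ : Submodule O V} {P : Ideal O}
    (hΛ : ∀ x ∈ Λ, ∀ y ∈ Λ, B x y ∈ (algebraMap O L).range)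
    (hnd : ∀ y ∈ Λ, (∀ x ∈ Λ, B x y ∈ coeSubmodule L (P.map τ)) → y ∈ P.map τ • Λ) :
    P • Λ ≤ P.map τ • Λ := fun y hy =>
  hnd y (smul_le_right hy) fun x hx => by
    simpa using B.apply_mem_coeSubmodule_of_mem_smul_right (K := ⊤)
      (fun w hw => by simpa [mem_coeSubmodule] using hΛ x hx w hw) hy

end Sesquilinear

def sesqFormOfHermitian {O L V : Type*} [CommRing O] [Field L] [Algebra O L] [AddCommGroup V]
    [Module L V] [Module O V] [IsScalarTower O L V] (τ : O ≃+* O) (σ : L ≃+* L)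
    (hστ : ∀ a : O, σ (algebraMap O L a) = algebraMap O L (τ a)) (φ : V → V → L)
    (haddl : ∀ x y z : V, φ (x + y) z = φ x z + φ y z)
    (hsmull : ∀ (a : L) (x y : V), φ (a • x) y = a * φ x y)
    (hherm : ∀ x y : V, φ y x = σ (φ x y)) : V →ₗ[O] V →ₛₗ[(τ : O →+* O)] L :=
  LinearMap.mk₂'ₛₗ (RingHom.id O) (τ : O →+* O) φ haddl
    (fun (c : O) x y => by rw [← algebraMap_smul L c x, hsmull, RingHom.id_apply, Algebra.smul_def])
    (fun x y z => by rw [hherm, haddl, map_add, ← hherm, ← hherm])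
    (fun (c : O) x y => by
      rw [hherm, ← algebraMap_smul L c y, hsmull, map_mul, hστ, ← hherm, Algebra.smul_def]; rfl)

theorem mem_coeSubmodule_map_of_hermitian {O L V : Type*} [CommRing O] [CommRing L]
    [Algebra O L] {τ : O ≃+* O} {σ : L ≃+* L}
    (hστ : ∀ a : O, σ (algebraMap O L a) = algebraMap O L (τ a)) {φ : V → V → L}
    (hherm : ∀ x y : V, φ y x = σ (φ x y)) {I : Ideal O} {x y : V}
    (h : φ x y ∈ coeSubmodule L I) : φ y x ∈ coeSubmodule L (I.map τ) := by
  obtain ⟨c, hc, hcxy⟩ := h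
  exact ⟨τ c, Ideal.mem_map_of_mem τ hc, by rw [hherm, ← hcxy]; exact (hστ c).symm⟩

theorem algebraMap_mem_coeSubmodule_iff {O L : Type*} [CommRing O] [Field L] [Algebra O L]
    [IsFractionRing O L] {I : Ideal O} {c : O} :
    algebraMap O L c ∈ coeSubmodule L I ↔ c ∈ I :=
  ⟨fun ⟨_, hx, hxc⟩ => IsFractionRing.injective O L hxc ▸ hx, fun h => ⟨c, h, rfl⟩⟩

section Uniformizer

variable {O L V : Type*} [CommRing O] [IsDomain O] [Field L] [Algebra O L] [IsFractionRing O L]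
  [AddCommGroup V] [Module L V] [Module O V] [IsScalarTower O L V]

theorem FractionalIdeal.smul_mem_of_mem_inv_of_mem_smul {I : Ideal O} {a : L}
    (ha : a ∈ (I : FractionalIdeal O⁰ L)⁻¹) {N : Submodule O V} {x : V} (hx : x ∈ I • N) :
    a • x ∈ N := by
  refine smul_induction_on hx (fun q hq w hw => ?_) fun x y hx hy => ?_
  · obtain ⟨c, hc⟩ := (FractionalIdeal.mem_one_iff O⁰).mp (FractionalIdeal.mul_one_div_le_one
      (FractionalIdeal.mul_mem_mul (FractionalIdeal.mem_coeIdeal_of_mem O⁰ hq) ha))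
    rw [← algebraMap_smul L q w, smul_smul, mul_comm, ← hc, algebraMap_smul]
    exact N.smul_mem c hw
  · rw [smul_add]; exact N.add_mem hx hy

theorem FractionalIdeal.span_inv_smul_le {I : Ideal O} {X N : Submodule O V} (hX : X ≤ I • N) :
    span O {z | ∃ a ∈ (((I : FractionalIdeal O⁰ L)⁻¹ : FractionalIdeal O⁰ L) : Submodule O L),
      ∃ x ∈ X, z = a • x} ≤ N :=
  span_le.mpr fun _ ⟨_, ha, _, hx, hz⟩ => hz ▸ smul_mem_of_mem_inv_of_mem_smul ha (hX hx)

/-- `a ∈ P⁻¹` inverts `π ∈ P` modulo `P`; in particular `π` is a uniformizer at `P`. -/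
structure IsLocalUniformizer (P : Ideal O) (π : O) (a : L) : Prop where
  mem : π ∈ P
  mem_inv : a ∈ (P : FractionalIdeal O⁰ L)⁻¹
  exists_mul_eq : ∃ p ∈ P, a * algebraMap O L π = algebraMap O L (1 - p)

variable {P : Ideal O} {π : O} {a : L}

theorem IsLocalUniformizer.mem_sup (h : IsLocalUniformizer P π a) {N₁ N₂ : Submodule O V} {w : V}
    (h₁ : a • π • w ∈ N₁) (h₂ : ∀ q ∈ P, q • w ∈ N₂) : w ∈ N₁ ⊔ N₂ := by
  obtain ⟨p, hp, hap⟩ := h.exists_mul_eq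
  have hw : a • π • w + p • w = w := by
    rw [← algebraMap_smul L π w, smul_smul, hap, algebraMap_smul, sub_smul, one_smul,
      sub_add_cancel]
  exact hw ▸ add_mem_sup h₁ (h₂ p hp)

theorem IsLocalUniformizer.mem_of_smul_mem_smul (h : IsLocalUniformizer P π a)
    {N : Submodule O V} {w : V} (h₁ : π • w ∈ P • N) (h₂ : ∀ q ∈ P, q • w ∈ N) : w ∈ N := by
  simpa using h.mem_sup (FractionalIdeal.smul_mem_of_mem_inv_of_mem_smul h.mem_inv h₁) h₂

end Uniformizer

theorem exists_isLocalUniformizer {O L : Type*} [CommRing O] [IsDedekindDomain O] [Field L]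
    [Algebra O L] [IsFractionRing O L] {P : Ideal O} [hPm : P.IsMaximal]
    (hP0 : P ≠ ⊥) : ∃ (π : O) (a : L), IsLocalUniformizer P π a := by
  have hinv : (P : FractionalIdeal O⁰ L)⁻¹ * P = 1 :=
    inv_mul_cancel₀ (FractionalIdeal.coeIdeal_ne_zero.mpr hP0)
  obtain ⟨a, ha, π, hπ, hnot⟩ : ∃ a ∈ (P : FractionalIdeal O⁰ L)⁻¹, ∃ π ∈ P,
      a * algebraMap O L π ∉ (P : FractionalIdeal O⁰ L) := by
    by_contra! h
    have hle : ((⊤ : Ideal O) : FractionalIdeal O⁰ L) ≤ P := by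
      rw [FractionalIdeal.coeIdeal_top, ← hinv]
      refine FractionalIdeal.mul_le.mpr fun a ha x hx => ?_
      obtain ⟨π, hπ, rfl⟩ := (FractionalIdeal.mem_coeIdeal O⁰).mp hx
      exact h a ha π hπ
    exact hPm.ne_top (top_le_iff.mp ((FractionalIdeal.coeIdeal_le_coeIdeal L).mp hle))
  obtain ⟨j, hj⟩ := (FractionalIdeal.mem_one_iff O⁰).mp
    (hinv ▸ FractionalIdeal.mul_mem_mul ha (FractionalIdeal.mem_coeIdeal_of_mem O⁰ hπ))
  have hjP : j ∉ P := fun h => hnot (hj ▸ FractionalIdeal.mem_coeIdeal_of_mem O⁰ h)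
  obtain ⟨y, p, hp, hyj⟩ := hPm.exists_inv hjP
  refine ⟨π, algebraMap O L y * a, hπ, ?_, p, hp, ?_⟩
  · rw [← Algebra.smul_def]; exact Submodule.smul_mem _ y ha
  · rw [mul_assoc, ← hj, ← map_mul, eq_sub_of_add_eq hyj]

section Construction

variable {O L V : Type*} [CommRing O] [IsDomain O] [Field L] [Algebra O L] [IsFractionRing O L]
  [AddCommGroup V] [Module L V] [Module O V] [IsScalarTower O L V]
  {τ : O →+* O} {B : V →ₗ[O] V →ₛₗ[τ] L} {P : Ideal O} {π : O} {a : L} {Λ Λ' : Submodule O V}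
  {ι : Type*} [Fintype ι] {u y : ι → V}

theorem IsLocalUniformizer.mem_of_sum_smul_mem (hU : IsLocalUniformizer P π a)
    (hu : IsBasisMod P u Λ' (Λ ⊓ Λ')) (hPΛ' : P • Λ' ≤ Λ ⊓ Λ') (d : ι → O)
    (hd : ∑ i, d i • (π • u) i ∈ P • span O (Set.range (π • u))) (i : ι) : d i ∈ P := by
  have hW : ∑ i, d i • u i ∈ Λ' := sum_mem fun i _ => smul_mem _ _ (hu.mem i)
  refine hu.mem_of_sum_mem d (hU.mem_of_smul_mem_smul ?_ fun q hq => hPΛ' (smul_mem_smul hq hW)) i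
  simp only [Finset.smul_sum, smul_comm π, ← Pi.smul_apply π u]
  exact smul_mono le_rfl ((span_range_smul_le_smul hU.mem hu.mem).trans hPΛ') hd

theorem IsLocalUniformizer.smul_le_span_sup (hU : IsLocalUniformizer P π a)
    (hu : IsBasisMod P u Λ' (Λ ⊓ Λ')) (hPΛ' : P • Λ' ≤ Λ ⊓ Λ') :
    P • Λ' ≤ span O (Set.range (π • u)) ⊔ P • (Λ ⊓ Λ') := by
  refine (smul_mono le_rfl hu.le_span_sup).trans ?_
  rw [smul_sup]
  refine sup_le (smul_le.mpr fun q hq n hn => hU.mem_sup ?_ fun p hp => ?_) le_sup_right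
  · rw [smul_comm π q]
    exact FractionalIdeal.smul_mem_of_mem_inv_of_mem_smul hU.mem_inv
      (smul_mem_smul hq (smul_mem_span_range_smul hn))
  · have hnΛ' : n ∈ Λ' := span_le.mpr (Set.range_subset_iff.mpr hu.mem) hn
    exact smul_mem_smul hp (hPΛ' (smul_mem_smul hq hnΛ'))

theorem IsLocalUniformizer.mem_of_forall_apply_mem (hU : IsLocalUniformizer P π a)
    (hnd : ∀ y ∈ Λ, (∀ x ∈ Λ, B y x ∈ coeSubmodule L P) → y ∈ P • Λ) (hPΛ' : P • Λ' ≤ Λ)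
    {w : V} (hw : w ∈ Λ') (hwΛ : ∀ x ∈ Λ, B (π • w) x ∈ coeSubmodule L P) : w ∈ Λ :=
  hU.mem_of_smul_mem_smul (hnd _ (hPΛ' (smul_mem_smul hU.mem hw)) hwΛ) fun _ hq =>
    hPΛ' (smul_mem_smul hq hw)

theorem IsLocalUniformizer.mem_of_forall_apply_smul_mem [P.IsPrime]
    (hU : IsLocalUniformizer P π a) (hτ : P.comap τ ≤ P)
    (hΛ : ∀ x ∈ Λ, ∀ y ∈ Λ, B x y ∈ (algebraMap O L).range)
    (hΛ' : ∀ x ∈ Λ', ∀ y ∈ Λ', B x y ∈ (algebraMap O L).range)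
    (hnd : ∀ y ∈ Λ, (∀ x ∈ Λ, B y x ∈ coeSubmodule L P) → y ∈ P • Λ)
    (hPΛ : P • Λ ≤ Λ ⊓ Λ') (hPΛ' : P • Λ' ≤ Λ ⊓ Λ')
    (hu : IsBasisMod P u Λ' (Λ ⊓ Λ')) (hy : IsBasisMod P y Λ (Λ ⊓ Λ'))
    {z : V} (hz : z ∈ Λ) (hzu : ∀ i, B (π • u i) z ∈ coeSubmodule L P) : z ∈ Λ' := by
  classical
  have hM : ∀ w ∈ Λ', ∀ m ∈ Λ ⊓ Λ', B (π • w) m ∈ coeSubmodule L P := fun w hw m hm =>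
    B.apply_mem_coeSubmodule_of_mem_smul_left (fun w' hw' => hΛ' w' hw' m hm.2)
      (smul_mem_smul hU.mem hw)
  -- `b` is the Gram matrix of the `π • u i` against the `y l`. Its left kernel modulo `P` is
  -- trivial by nondegeneracy of `Λ`, hence so is its right kernel, which is what `z` gives.
  choose b hb using fun i l => hΛ _ (hPΛ' (smul_mem_smul hU.mem (hu.mem i))).1 _ (hy.mem l)
  have hleft : ∀ d : ι → O, (∀ l, ∑ i, d i * b i l ∈ P) → ∀ i, d i ∈ P := by
    intro d hd
    have hW : ∑ i, d i • u i ∈ Λ' := sum_mem fun i _ => smul_mem _ _ (hu.mem i)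
    refine hu.mem_of_sum_mem d
      ⟨hU.mem_of_forall_apply_mem hnd (hPΛ'.trans inf_le_left) hW fun x hx => ?_, hW⟩
    suffices hle : span O (Set.range y) ⊔ Λ ⊓ Λ' ≤
        (coeSubmodule L P).comap (B (π • ∑ i, d i • u i)) from hle (hy.le_span_sup hx)
    refine sup_le (span_le.mpr (Set.range_subset_iff.mpr fun l => ?_)) fun m hm => hM _ hW m hm
    have hsum : B (π • ∑ i, d i • u i) (y l) = algebraMap O L (∑ i, d i * b i l) := by
      simp [Finset.smul_sum, smul_comm π, hb, Algebra.smul_def]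
    change B _ (y l) ∈ coeSubmodule L P
    rw [hsum]
    exact algebraMap_mem_coeSubmodule_iff.mpr (hd l)
  obtain ⟨s, hs, m, hm, rfl⟩ := Submodule.mem_sup.mp (hy.le_span_sup hz)
  obtain ⟨e, rfl⟩ := (mem_span_range_iff_exists_fun O).mp hs
  have he : ∀ l, e l ∈ P := fun l => hτ <| Ideal.mem_of_sum_mul_mem hleft (fun i => by
    have hsum : B (π • u i) (∑ l, e l • y l) = algebraMap O L (∑ l, b i l * τ (e l)) := by
      simp [hb, Algebra.smul_def, mul_comm]
    have h := sub_mem (hzu i) (hM _ (hu.mem i) m hm)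
    rwa [map_add, add_sub_cancel_right, hsum, algebraMap_mem_coeSubmodule_iff] at h) l
  exact add_mem (hPΛ (sum_mem fun l _ => smul_mem_smul (he l) (hy.mem l))).2 hm.2

end Construction

section Neighbor

variable {O L V : Type*} [CommRing O] [IsDedekindDomain O] [Field L] [Algebra O L]
  [IsFractionRing O L] [AddCommGroup V] [Module L V] [Module O V] [IsScalarTower O L V]
  {τ : O →+* O} (B : V →ₗ[O] V →ₛₗ[τ] L) {P : Ideal O} {Λ Λ' : Submodule O V}

theorem exists_isIsotropicOfDim_zero {Pbar : Ideal O} (Nf : Submodule O V → Submodule O V)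
    (hNf : ∀ X z, z ∈ Nf X ↔ ∀ x ∈ X, B x z ∈ coeSubmodule L Pbar) :
    ∃ X, IsIsotropicOfDim O L V (fun x y => B x y) Λ P Pbar 0 X ∧ X ≤ P • Λ ∧
      P • Λ ≤ X ⊔ P • (Λ ⊓ Λ) ∧
      span O {z | ∃ a ∈ (((P : FractionalIdeal O⁰ L)⁻¹ : FractionalIdeal O⁰ L) : Submodule O L),
        ∃ x ∈ X, z = a • x} ⊔ (Λ ⊓ Nf X) = Λ := by
  have hB : ∀ x ∈ (⊥ : Submodule O V), ∀ z, B x z = 0 := by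
    intro x hx z; rw [(mem_bot O).mp hx, map_zero, LinearMap.zero_apply]
  refine ⟨⊥, ⟨bot_le, fg_bot, fun x hx z _ => by simp only [hB x hx z, zero_mem],
    ⟨LinearEquiv.ofSubsingleton _ _⟩⟩, bot_le, by rw [bot_sup_eq, inf_idem], ?_⟩
  refine le_antisymm (sup_le (FractionalIdeal.span_inv_smul_le bot_le) inf_le_left) fun z hz =>
    mem_sup_right ⟨hz, (hNf ⊥ z).mpr fun x hx => ?_⟩
  rw [hB x hx z]; exact zero_mem _

theorem exists_isIsotropicOfDim_of_comap_le [hP : P.IsPrime] (hP0 : P ≠ ⊥) {k : ℕ}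
    {u y : Fin k → V} (hτmap : P.map τ ≤ P) (hτ : P.comap τ ≤ P)
    (hΛ : ∀ x ∈ Λ, ∀ y ∈ Λ, B x y ∈ (algebraMap O L).range)
    (hΛ' : ∀ x ∈ Λ', ∀ y ∈ Λ', B x y ∈ (algebraMap O L).range)
    (hnd : ∀ y ∈ Λ, (∀ x ∈ Λ, B y x ∈ coeSubmodule L P) → y ∈ P • Λ)
    (hPΛ : P • Λ ≤ Λ ⊓ Λ') (hPΛ' : P • Λ' ≤ Λ ⊓ Λ')
    (hu : IsBasisMod P u Λ' (Λ ⊓ Λ')) (hy : IsBasisMod P y Λ (Λ ⊓ Λ'))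
    (Nf : Submodule O V → Submodule O V)
    (hNf : ∀ X z, z ∈ Nf X ↔ ∀ x ∈ X, B x z ∈ coeSubmodule L P) :
    ∃ X, IsIsotropicOfDim O L V (fun x y => B x y) Λ P P k X ∧ X ≤ P • Λ' ∧
      P • Λ' ≤ X ⊔ P • (Λ ⊓ Λ') ∧
      span O {z | ∃ a ∈ (((P : FractionalIdeal O⁰ L)⁻¹ : FractionalIdeal O⁰ L) : Submodule O L),
        ∃ x ∈ X, z = a • x} ⊔ (Λ ⊓ Nf X) = Λ' := by
  have := hP.isMaximal hP0
  obtain ⟨π, a, hU⟩ := exists_isLocalUniformizer (L := L) hP0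
  have hXP : span O (Set.range (π • u)) ≤ P • Λ' := span_range_smul_le_smul hU.mem hu.mem
  have hMNf : Λ ⊓ Λ' ≤ Λ ⊓ Nf (span O (Set.range (π • u))) := fun m hm => ⟨hm.1, (hNf _ m).mpr
    fun x hx => B.apply_mem_coeSubmodule_of_mem_smul_left (fun w hw => hΛ' w hw m hm.2) (hXP hx)⟩
  refine ⟨span O (Set.range (π • u)), ⟨hXP.trans (hPΛ'.trans inf_le_left),
    fg_span (Set.finite_range _), fun x hx z hz => ?_,
    nonempty_quotSmulTopEquivPi (hU.mem_of_sum_smul_mem hu hPΛ')⟩,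
    hXP, hU.smul_le_span_sup hu hPΛ', le_antisymm ?_ ?_⟩
  · refine coeSubmodule_mono L (Ideal.mul_mono_left hτmap) ?_
    exact B.apply_mem_coeSubmodule_of_mem_smul_right (fun w hw =>
      B.apply_mem_coeSubmodule_of_mem_smul_left (fun w' hw' => hΛ' w' hw' w hw) (hXP hx)) (hXP hz)
  · exact sup_le (FractionalIdeal.span_inv_smul_le hXP) fun z hz =>
      hU.mem_of_forall_apply_smul_mem hτ hΛ hΛ' hnd hPΛ hPΛ' hu hy hz.1 fun i =>
        (hNf _ z).mp hz.2 _ (subset_span ⟨i, rfl⟩)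
  · refine hu.le_span_sup.trans (sup_le (span_le.mpr (Set.range_subset_iff.mpr fun i => ?_))
      (hMNf.trans le_sup_right))
    exact hU.mem_sup (subset_span ⟨a, hU.mem_inv, π • u i, subset_span ⟨i, rfl⟩, rfl⟩)
      fun q hq => hMNf (hPΛ' (smul_mem_smul hq (hu.mem i)))

end Neighbor

theorem neighbor_is_isotropic_construction_general
    (O : Type*) [CommRing O] [IsDedekindDomain O]
    (L : Type*) [Field L] [Algebra O L] [IsFractionRing O L]
    (τ : O ≃+* O) (σ : L ≃+* L)
    (hστ : ∀ a : O, σ (algebraMap O L a) = algebraMap O L (τ a))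
    (V : Type*) [AddCommGroup V] [Module L V] [Module O V] [IsScalarTower O L V]
    (φ : V → V → L)
    (haddl : ∀ x y z : V, φ (x + y) z = φ x z + φ y z)
    (hsmull : ∀ (a : L) (x y : V), φ (a • x) y = a * φ x y)
    (hherm : ∀ x y : V, φ y x = σ (φ x y))
    (Λ : Submodule O V)
    (hint : ∀ x ∈ Λ, ∀ y ∈ Λ, φ x y ∈ (algebraMap O L).range)
    (P : Ideal O) (hP : P.IsPrime) (hP0 : P ≠ ⊥)
    (Pbar : Ideal O) (hPbar : Pbar = P.map τ)
    -- `p ∤ d(Λ)`: `φ` is nondegenerate on `Λ` modulo `P` and modulo `P̄`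
    (hcopbar : ∀ y ∈ Λ, (∀ x ∈ Λ,
        φ x y ∈ Submodule.map (Algebra.linearMap O L) (Pbar : Submodule O O)) →
      y ∈ Pbar • Λ)
    -- the neighbor construction `X ↦ Λ(P,X) = P⁻¹X + (Λ ∩ P̄·X^#)`,
    -- where `P̄·X^# = {y ∈ V : φ(X,y) ⊆ P̄}`
    (Nf : Submodule O V → Submodule O V)
    (hNf : ∀ (X : Submodule O V) (y : V), y ∈ Nf X ↔ ∀ x ∈ X,
      φ x y ∈ Submodule.map (Algebra.linearMap O L) (Pbar : Submodule O O))
    (nbr : Submodule O V → Submodule O V)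
    (hnbr : ∀ X : Submodule O V, nbr X = Submodule.span O {z : V | ∃ a ∈
      ((((P : FractionalIdeal O⁰ L))⁻¹ : FractionalIdeal O⁰ L) : Submodule O L),
      ∃ x ∈ X, z = a • x} ⊔ (Λ ⊓ Nf X))
    (k : ℕ)
    (Pi : Submodule O V) (hPi : IsPkNeighbor O L V φ Λ P Pbar k Pi) :
    ∃ X : Submodule O V, IsIsotropicOfDim O L V φ Λ P Pbar k X ∧
      X ≤ P • Pi ∧ P • Pi ≤ X ⊔ P • (Λ ⊓ Pi) ∧ nbr X = Pi := by
  set B := sesqFormOfHermitian τ σ hστ φ haddl hsmull hherm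
  obtain ⟨hΛ', ⟨e'⟩, ⟨e⟩⟩ := hPi
  obtain ⟨u, hu⟩ := exists_isBasisMod_of_quotEquivPi e'
  obtain ⟨y, hy⟩ := exists_isBasisMod_of_quotEquivPi e
  have hPΛ : P • Λ ≤ Λ ⊓ Pi := by
    subst hPbar
    exact (B.smul_le_map_smul hint hcopbar).trans (smul_le_of_quotEquivPi e)
  rcases k.eq_zero_or_pos with rfl | hk
  · obtain rfl : Pi = Λ :=
      le_antisymm (hu.le_of_isEmpty.trans inf_le_left) (hy.le_of_isEmpty.trans inf_le_right)
    obtain ⟨X, hX, hXP, hPX, hXnbr⟩ := exists_isIsotropicOfDim_zero B Nf hNf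
    exact ⟨X, hX, hXP, hPX, (hnbr X).trans hXnbr⟩
  · have := Fin.pos_iff_nonempty.mp hk
    have hPP : P = Pbar := (hP.isMaximal hP0).eq_of_le
      (hPbar ▸ (Ideal.map_isPrime_of_equiv τ).ne_top) (hy.le_of_smul_le hPΛ)
    subst hPP
    have hτ : P.comap (τ : O →+* O) ≤ P := fun c hc => by
      rw [Ideal.mem_comap, hPbar] at hc
      exact Ideal.apply_mem_of_equiv_iff.mp hc
    have hnd : ∀ z ∈ Λ, (∀ x ∈ Λ, B z x ∈ coeSubmodule L P) → z ∈ P • Λ := fun z hz h =>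
      hcopbar z hz fun x hx => hPbar ▸ mem_coeSubmodule_map_of_hermitian hστ hherm (h x hx)
    obtain ⟨X, hX, hXP, hPX, hXnbr⟩ := exists_isIsotropicOfDim_of_comap_le B hP0 hPbar.ge hτ
      hint hΛ' hnd hPΛ (smul_le_of_quotEquivPi e') hu hy Nf hNf
    exact ⟨X, hX, hXP, hPX, (hnbr X).trans hXnbr⟩

/-- Every `P^k`-neighbor `Π` of `Λ` (for the prime below `P` coprime to `d(Λ)`) equals
`Λ(P,X)` for some `X ⊆ Λ` isotropic modulo `P` with `dim X/PX = k`; moreover one may take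
`X` generated by representatives of `PΠ` modulo `P(Π ∩ Λ)`, i.e. with `X ⊆ PΠ` and
`PΠ ⊆ X + P(Λ ∩ Π)`. -/
theorem neighbor_is_isotropic_construction
    (O : Type*) [CommRing O] [IsDedekindDomain O]
    (L : Type*) [Field L] [Algebra O L] [IsFractionRing O L]
    (τ : O ≃+* O) (σ : L ≃+* L) (hσ : ∀ a, σ (σ a) = a)
    (hστ : ∀ a : O, σ (algebraMap O L a) = algebraMap O L (τ a))
    (V : Type*) [AddCommGroup V] [Module L V] [Module O V] [IsScalarTower O L V]
    (φ : V → V → L)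
    (haddl : ∀ x y z : V, φ (x + y) z = φ x z + φ y z)
    (hsmull : ∀ (a : L) (x y : V), φ (a • x) y = a * φ x y)
    (hherm : ∀ x y : V, φ y x = σ (φ x y))
    (Λ : Submodule O V)
    (hint : ∀ x ∈ Λ, ∀ y ∈ Λ, φ x y ∈ (algebraMap O L).range)
    (P : Ideal O) (hP : P.IsPrime) (hP0 : P ≠ ⊥)
    (Pbar : Ideal O) (hPbar : Pbar = P.map τ)
    -- `p ∤ d(Λ)`: `φ` is nondegenerate on `Λ` modulo `P` and modulo `P̄`
    (hcopbar : ∀ y ∈ Λ, (∀ x ∈ Λ,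
        φ x y ∈ Submodule.map (Algebra.linearMap O L) (Pbar : Submodule O O)) →
      y ∈ Pbar • Λ)
    (hcop : ∀ y ∈ Λ, (∀ x ∈ Λ,
        φ x y ∈ Submodule.map (Algebra.linearMap O L) (P : Submodule O O)) →
      y ∈ P • Λ)
    -- the neighbor construction `X ↦ Λ(P,X) = P⁻¹X + (Λ ∩ P̄·X^#)`,
    -- where `P̄·X^# = {y ∈ V : φ(X,y) ⊆ P̄}`
    (Nf : Submodule O V → Submodule O V)
    (hNf : ∀ (X : Submodule O V) (y : V), y ∈ Nf X ↔ ∀ x ∈ X,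
      φ x y ∈ Submodule.map (Algebra.linearMap O L) (Pbar : Submodule O O))
    (nbr : Submodule O V → Submodule O V)
    (hnbr : ∀ X : Submodule O V, nbr X = Submodule.span O {z : V | ∃ a ∈
      ((((P : FractionalIdeal O⁰ L))⁻¹ : FractionalIdeal O⁰ L) : Submodule O L),
      ∃ x ∈ X, z = a • x} ⊔ (Λ ⊓ Nf X))
    (k : ℕ)
    (Pi : Submodule O V) (hPi : IsPkNeighbor O L V φ Λ P Pbar k Pi) :
    ∃ X : Submodule O V, IsIsotropicOfDim O L V φ Λ P Pbar k X ∧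
      X ≤ P • Pi ∧ P • Pi ≤ X ⊔ P • (Λ ⊓ Pi) ∧ nbr X = Pi :=
  neighbor_is_isotropic_construction_general O L τ σ hστ V φ haddl hsmull hherm Λ hint P hP hP0 Pbar
    hPbar hcopbar Nf hNf nbr hnbr k Pi hPi
end

section
/- A Z-linear map f : Λ → Π between Z_L-lattices in a Hermitian L-space (V, φ) is a Z_L-linear isometry if and only if each of the Q-bilinear trace forms φ_i(x,y) = Tr_{L/Q} φ(a_i x, y) is invariant under f, where a_1,…,a_d is a Z-basis of Z_L with a_1 = 1. -/
/-!
Since `φ(aᵢ x, y) = aᵢ φ(x, y)` and the `aᵢ` form a `ℚ`-basis of `L`, nondegeneracy of the trace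
form turns invariance of all the `φᵢ` into invariance of `φ` itself. An isometry onto a full
lattice `Π` is then automatically `Z_L`-linear: `w = f(c x) - c f(x)` is `φ`-orthogonal to `Π`,
hence to its `L`-span `V`, so `w = 0` by nondegeneracy of `φ`.
-/

open NumberField

theorem NumberField.eq_zero_of_forall_trace_basis_mul_eq_zero {L : Type*} [Field L]
    [NumberField L] {ι : Type*} (a : Module.Basis ι ℤ (𝓞 L)) {t : L}
    (h : ∀ i, Algebra.trace ℚ L (algebraMap (𝓞 L) L (a i) * t) = 0) : t = 0 := by
  let b : Module.Basis ι ℚ L := a.localizationLocalization ℚ (nonZeroDivisors ℤ) L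
  have htrace : Algebra.traceForm ℚ L t = 0 :=
    b.ext fun i => by
      simpa [b, mul_comm t] using h i
  exact (traceForm_nondegenerate ℚ L).1 t fun y => by simp [htrace]

section SesquilinearForm

variable {L : Type*} [Field L] {V : Type*} [AddCommGroup V] [Module L V] {φ : V → V → L}

def leftLinearMap (haddl : ∀ x y z : V, φ (x + y) z = φ x z + φ y z)
    (hsmull : ∀ (a : L) (x y : V), φ (a • x) y = a * φ x y) (w : V) : V →ₗ[L] L where
  toFun x := φ x w
  map_add' x y := haddl x y w
  map_smul' a x := hsmull a x w

theorem eq_zero_of_forall_mem_of_span_eq_top (σ : L ≃+* L)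
    (haddl : ∀ x y z : V, φ (x + y) z = φ x z + φ y z)
    (hsmull : ∀ (a : L) (x y : V), φ (a • x) y = a * φ x y)
    (hherm : ∀ x y : V, φ y x = σ (φ x y))
    (hnondeg : ∀ x : V, (∀ y : V, φ x y = 0) → x = 0)
    {s : Set V} (hs : Submodule.span L s = ⊤) {w : V} (h : ∀ z ∈ s, φ w z = 0) : w = 0 := by
  have hleft : leftLinearMap haddl hsmull w = 0 :=
    LinearMap.ext_on hs fun z hz => by
      simp [leftLinearMap, hherm w z, h z hz]
  refine hnondeg w fun z => ?_
  rw [hherm z w, show φ z w = 0 from LinearMap.congr_fun hleft z, map_zero]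

variable [Module (𝓞 L) V] [IsScalarTower (𝓞 L) L V]

theorem map_smul_of_isometry_of_surjective (σ : L ≃+* L)
    (haddl : ∀ x y z : V, φ (x + y) z = φ x z + φ y z)
    (hsmull : ∀ (a : L) (x y : V), φ (a • x) y = a * φ x y)
    (hherm : ∀ x y : V, φ y x = σ (φ x y))
    (hnondeg : ∀ x : V, (∀ y : V, φ x y = 0) → x = 0)
    {Λ Pi : Submodule (𝓞 L) V} (hPifull : Submodule.span L (Pi : Set V) = ⊤)
    {f : Λ → Pi} (hf : Function.Surjective f)
    (hpres : ∀ x y : Λ, φ (f x : V) (f y : V) = φ (x : V) (y : V)) (c : 𝓞 L) (x : Λ) :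
    (f (c • x) : V) = c • (f x : V) := by
  rw [← sub_eq_zero]
  refine eq_zero_of_forall_mem_of_span_eq_top σ haddl hsmull hherm hnondeg hPifull fun z hz => ?_
  obtain ⟨y, hy⟩ := hf ⟨z, hz⟩
  obtain rfl : (f y : V) = z := congrArg Subtype.val hy
  have hsub : φ ((f (c • x) : V) - c • (f x : V)) (f y) =
      φ (f (c • x)) (f y) - φ (c • f x) (f y) :=
    (leftLinearMap haddl hsmull (f y : V)).map_sub _ _
  rw [hsub, hpres, Submodule.coe_smul, ← algebraMap_smul L c (x : V),
    ← algebraMap_smul L c (f x : V), hsmull, hsmull, hpres, sub_self]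

end SesquilinearForm

theorem isometry_iff_trace_forms_invariant_general
    (L : Type*) [Field L] [NumberField L]
    (σ : L ≃+* L)
    (V : Type*) [AddCommGroup V] [Module L V] [Module (𝓞 L) V] [IsScalarTower (𝓞 L) L V]
    (φ : V → V → L)
    (haddl : ∀ x y z : V, φ (x + y) z = φ x z + φ y z)
    (hsmull : ∀ (a : L) (x y : V), φ (a • x) y = a * φ x y)
    (hherm : ∀ x y : V, φ y x = σ (φ x y))
    (hnondeg : ∀ x : V, (∀ y : V, φ x y = 0) → x = 0)
    (d : ℕ)
    (a : Module.Basis (Fin d) ℤ (𝓞 L))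
    (Λ Pi : Submodule (𝓞 L) V)
    (hPifull : Submodule.span L (Pi : Set V) = ⊤)
    (f : ↥Λ ≃ₗ[ℤ] ↥Pi) :
    ((∀ (c : 𝓞 L) (x : ↥Λ), (f (c • x) : V) = c • (f x : V)) ∧
      (∀ x y : ↥Λ, φ (f x : V) (f y : V) = φ (x : V) (y : V))) ↔
    (∀ (i : Fin d) (x y : ↥Λ),
      Algebra.trace ℚ L (φ ((algebraMap (𝓞 L) L (a i)) • (f x : V)) (f y : V)) =
      Algebra.trace ℚ L (φ ((algebraMap (𝓞 L) L (a i)) • (x : V)) (y : V))) := by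
  simp only [hsmull]
  refine ⟨fun ⟨_, hpres⟩ i x y => by rw [hpres], fun htr => ?_⟩
  have hpres : ∀ x y : Λ, φ (f x : V) (f y : V) = φ (x : V) (y : V) := fun x y =>
    sub_eq_zero.mp <| eq_zero_of_forall_trace_basis_mul_eq_zero a fun i => by
      rw [mul_sub, map_sub, htr, sub_self]
  exact ⟨map_smul_of_isometry_of_surjective σ haddl hsmull hherm hnondeg hPifull
    f.surjective hpres, hpres⟩

/-- A `ℤ`-linear bijection `f : Λ → Π` between `Z_L`-lattices in a Hermitian `L`-space
`(V, φ)` is a `Z_L`-linear isometry if and only if each of the `ℚ`-bilinear trace forms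
`φᵢ(x,y) = Tr_{L/ℚ} φ(aᵢ x, y)` is invariant under `f`, where `a₁, …, a_d` is a `ℤ`-basis
of `Z_L` with `a₁ = 1`. -/
theorem isometry_iff_trace_forms_invariant
    (L : Type*) [Field L] [NumberField L]
    (σ : L ≃+* L) (hσ : ∀ a, σ (σ a) = a)
    (V : Type*) [AddCommGroup V] [Module L V] [Module (𝓞 L) V] [IsScalarTower (𝓞 L) L V]
    (φ : V → V → L)
    (haddl : ∀ x y z : V, φ (x + y) z = φ x z + φ y z)
    (hsmull : ∀ (a : L) (x y : V), φ (a • x) y = a * φ x y)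
    (hherm : ∀ x y : V, φ y x = σ (φ x y))
    (hnondeg : ∀ x : V, (∀ y : V, φ x y = 0) → x = 0)
    (d : ℕ) (hd : d = Module.finrank ℚ L)
    (a : Module.Basis (Fin d) ℤ (𝓞 L)) (ha1 : ∀ (h : 0 < d), algebraMap (𝓞 L) L (a ⟨0, h⟩) = 1)
    (Λ Pi : Submodule (𝓞 L) V)
    (hΛfull : Submodule.span L (Λ : Set V) = ⊤)
    (hPifull : Submodule.span L (Pi : Set V) = ⊤)
    (f : ↥Λ ≃ₗ[ℤ] ↥Pi) :
    ((∀ (c : 𝓞 L) (x : ↥Λ), (f (c • x) : V) = c • (f x : V)) ∧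
      (∀ x y : ↥Λ, φ (f x : V) (f y : V) = φ (x : V) (y : V))) ↔
    (∀ (i : Fin d) (x y : ↥Λ),
      Algebra.trace ℚ L (φ ((algebraMap (𝓞 L) L (a i)) • (f x : V)) (f y : V)) =
      Algebra.trace ℚ L (φ ((algebraMap (𝓞 L) L (a i)) • (x : V)) (y : V))) :=
  isometry_iff_trace_forms_invariant_general L σ V φ haddl hsmull hherm hnondeg d a Λ Pi hPifull f
end
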